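/- Let b ∈ ℝ^{NK} be any vector with R·α̃(γ, b) ≠ c. Set h = (R·α̃(γ, b) − c)ᵀ (σ² R Ñ_Σ(γ)^{-1} Rᵀ)^{-1} (R·α̃(γ, b) − c) for a constant σ² > 0, let Σ̃_R = σ² R Ñ_Σ(γ)^{-1} Rᵀ, J = (Σ̃_R^{-1/2}(R·α̃(γ, b) − c)) / ‖Σ̃_R^{-1/2}(R·α̃(γ, b) − c)‖, and W = 𝔻(γ)·α̃_R(γ, b) + M_{𝔻(γ)}·b. Then b = √h · P_{(𝔻(γ),R)} Σ̃_R^{1/2} J + W. -/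

import Mathlib

open Matrix MeasureTheory ProbabilityTheory
open scoped Kronecker Classical

noncomputable section

/-- The group-dummy matrix `D(γ)`: entry `(i, g)` is `1` if `γ i = g` and `0` otherwise. -/
def Dmat {N G : ℕ} (γ : Fin N → Fin G) : Matrix (Fin N) (Fin G) ℝ :=
  Matrix.of fun i g => if γ i = g then (1 : ℝ) else 0

/-- `𝔻(γ) = D(γ) ⊗ I_K`. -/
def Dbb {N G : ℕ} (K : ℕ) (γ : Fin N → Fin G) :
    Matrix (Fin N × Fin K) (Fin G × Fin K) ℝ :=
  Dmat γ ⊗ₖ (1 : Matrix (Fin K) (Fin K) ℝ)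

/-- The group sizes `n_g = #{i : γ i = g}`. -/
def ngrp {N G : ℕ} (γ : Fin N → Fin G) (g : Fin G) : ℕ :=
  Finset.card (Finset.filter (fun i => γ i = g) Finset.univ)

/-- `Ñ_Σ(γ) = diag(n_1, …, n_G) ⊗ Σ`. -/
def Ntil {N G K : ℕ} (γ : Fin N → Fin G) (S : Matrix (Fin K) (Fin K) ℝ) :
    Matrix (Fin G × Fin K) (Fin G × Fin K) ℝ :=
  (Matrix.diagonal fun g : Fin G => (ngrp γ g : ℝ)) ⊗ₖ S

/-- The unconstrained TSK group-mean estimator `α̃(γ, b) = (𝔻(γ)ᵀ𝔻(γ))⁻¹𝔻(γ)ᵀ b`. -/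
def alphaTil {N G K : ℕ} (γ : Fin N → Fin G) (b : Fin N × Fin K → ℝ) :
    Fin G × Fin K → ℝ :=
  (((Dbb K γ)ᵀ * Dbb K γ)⁻¹ * (Dbb K γ)ᵀ) *ᵥ b

/-- The constrained TSK estimator
`α̃_R(γ, b) = α̃(γ, b) − Ñ_Σ(γ)⁻¹Rᵀ[R Ñ_Σ(γ)⁻¹Rᵀ]⁻¹(R α̃(γ, b) − c)`. -/
def alphaTilR {N G K r : ℕ} (γ : Fin N → Fin G) (S : Matrix (Fin K) (Fin K) ℝ)
    (R : Matrix (Fin r) (Fin G × Fin K) ℝ) (c : Fin r → ℝ) (b : Fin N × Fin K → ℝ) :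
    Fin G × Fin K → ℝ :=
  alphaTil γ b -
    ((Ntil γ S)⁻¹ * Rᵀ * (R * (Ntil γ S)⁻¹ * Rᵀ)⁻¹) *ᵥ (R *ᵥ alphaTil γ b - c)

/-- `X` is an (`ι`-indexed) Gaussian random vector with mean `μ` and covariance matrix `C`:
it is measurable, and every linear functional of `X` has the corresponding one-dimensional
Gaussian law. -/
def IsGaussianVec {Ω ι : Type*} [MeasurableSpace Ω] [Fintype ι]
    (P : Measure Ω) (X : Ω → ι → ℝ) (μ : ι → ℝ) (C : Matrix ι ι ℝ) : Prop :=
  Measurable X ∧ ∀ l : ι → ℝ,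
    P.map (fun ω => l ⬝ᵥ X ω) = gaussianReal (l ⬝ᵥ μ) (Real.toNNReal (l ⬝ᵥ (C *ᵥ l)))

/-- The chi-squared distribution with `k` degrees of freedom, i.e. `Gamma(k/2, 1/2)`. -/
def chiSq (k : ℕ) : Measure ℝ := gammaMeasure ((k : ℝ) / 2) (1 / 2)

/-- The positive-semidefinite square root of a matrix (junk value `0` if the matrix is not
positive semidefinite). -/
def matSqrt {n : Type*} [Fintype n] [DecidableEq n] (M : Matrix n n ℝ) :
    Matrix n n ℝ :=
  if h : M.PosSemidef then
    (h.1.eigenvectorUnitary : Matrix n n ℝ) * diagonal ((↑) ∘ (√·) ∘ h.1.eigenvalues) *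
      (star h.1.eigenvectorUnitary : Matrix n n ℝ)
  else 0

/-- The squared Euclidean norm `‖v‖²`. -/
def sqNorm {ι : Type*} [Fintype ι] (v : ι → ℝ) : ℝ := ∑ i, v i ^ 2

/-- The Euclidean direction `v / ‖v‖` (junk value `0` when `v = 0`). -/
def dir {ι : Type*} [Fintype ι] (v : ι → ℝ) : ι → ℝ :=
  (Real.sqrt (sqNorm v))⁻¹ • v

/-- The `NT × NK` block-diagonal design matrix `𝕏` with diagonal blocks `X_i`. -/
def bigX {N T K : ℕ} (X : Fin N → Matrix (Fin T) (Fin K) ℝ) :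
    Matrix (Fin N × Fin T) (Fin N × Fin K) ℝ :=
  Matrix.of fun it jk => if it.1 = jk.1 then X it.1 it.2 jk.2 else 0

/-- The PCR estimator `α̂(γ, s) = (𝕏(γ)ᵀ𝕏(γ))⁻¹𝔻(γ)ᵀ s`, where `𝕏(γ) = 𝕏 𝔻(γ)`. -/
def alphaHat {N G K T : ℕ} (X : Fin N → Matrix (Fin T) (Fin K) ℝ)
    (γ : Fin N → Fin G) (s : Fin N × Fin K → ℝ) : Fin G × Fin K → ℝ :=
  (((bigX X * Dbb K γ)ᵀ * (bigX X * Dbb K γ))⁻¹ * (Dbb K γ)ᵀ) *ᵥ s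

/-- The constrained PCR estimator
`α̂_R(γ, s) = α̂(γ, s) − [𝕏(γ)ᵀ𝕏(γ)]⁻¹Rᵀ{R[𝕏(γ)ᵀ𝕏(γ)]⁻¹Rᵀ}⁻¹(R α̂(γ, s) − c)`. -/
def alphaHatR {N G K T r : ℕ} (X : Fin N → Matrix (Fin T) (Fin K) ℝ)
    (γ : Fin N → Fin G) (R : Matrix (Fin r) (Fin G × Fin K) ℝ) (c : Fin r → ℝ)
    (s : Fin N × Fin K → ℝ) : Fin G × Fin K → ℝ :=
  alphaHat X γ s -
    (((bigX X * Dbb K γ)ᵀ * (bigX X * Dbb K γ))⁻¹ * Rᵀ *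
      (R * ((bigX X * Dbb K γ)ᵀ * (bigX X * Dbb K γ))⁻¹ * Rᵀ)⁻¹) *ᵥ
      (R *ᵥ alphaHat X γ s - c)


lemma DmatT_Dmat {N G : ℕ} (γ : Fin N → Fin G) :
    (Dmat γ)ᵀ * Dmat γ = Matrix.diagonal (fun g => (ngrp γ g : ℝ)) := by
  ext g g'
  simp only [Matrix.mul_apply, Matrix.transpose_apply, Dmat, Matrix.of_apply,
    Matrix.diagonal_apply]
  have : ∀ i, ((if γ i = g then (1:ℝ) else 0) * (if γ i = g' then 1 else 0)) =
      if γ i = g ∧ γ i = g' then 1 else 0 := by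
    intro i; by_cases h1 : γ i = g <;> by_cases h2 : γ i = g' <;> simp [h1, h2]
  rw [Finset.sum_congr rfl fun i _ => this i]
  rw [Finset.sum_boole]
  by_cases h : g = g'
  · subst h
    simp [ngrp]
  · rw [if_neg h]
    norm_num
    intro i h1 h2; exact h (h1.symm.trans h2)

lemma ngrp_pos {N G : ℕ} (γ : Fin N → Fin G) (hγ : ∀ g : Fin G, ∃ i : Fin N, γ i = g)
    (g : Fin G) : 0 < (ngrp γ g : ℝ) := by
  have : 0 < ngrp γ g := by
    obtain ⟨i, hi⟩ := hγ g
    exact Finset.card_pos.mpr ⟨i, by simp [hi]⟩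
  exact_mod_cast this

lemma DtD {N G K : ℕ} (γ : Fin N → Fin G) :
    (Dbb K γ)ᵀ * Dbb K γ =
      (Matrix.diagonal fun g => (ngrp γ g : ℝ)) ⊗ₖ (1 : Matrix (Fin K) (Fin K) ℝ) := by
  rw [Dbb, ← Matrix.kroneckerMap_transpose, ← Matrix.mul_kronecker_mul, DmatT_Dmat,
    Matrix.transpose_one, Matrix.one_mul]

lemma DtD_inv {N G K : ℕ} (γ : Fin N → Fin G) (hγ : ∀ g : Fin G, ∃ i : Fin N, γ i = g) :
    ((Dbb K γ)ᵀ * Dbb K γ)⁻¹ =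
      (Matrix.diagonal fun g => ((ngrp γ g : ℝ))⁻¹) ⊗ₖ (1 : Matrix (Fin K) (Fin K) ℝ) := by
  rw [DtD]
  apply Matrix.inv_eq_right_inv
  rw [← Matrix.mul_kronecker_mul, Matrix.one_mul, Matrix.diagonal_mul_diagonal]
  have : (fun g => (ngrp γ g : ℝ) * ((ngrp γ g : ℝ))⁻¹) = fun _ => (1:ℝ) := by
    funext g; exact mul_inv_cancel₀ (ngrp_pos γ hγ g).ne'
  rw [this, Matrix.diagonal_one, Matrix.one_kronecker_one]

lemma key {N G K : ℕ} (γ : Fin N → Fin G) (hγ : ∀ g : Fin G, ∃ i : Fin N, γ i = g)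
    (S : Matrix (Fin K) (Fin K) ℝ) (hS : S.PosDef) :
    ((1 : Matrix (Fin N) (Fin N) ℝ) ⊗ₖ S⁻¹) * Dbb K γ * ((Dbb K γ)ᵀ * Dbb K γ)⁻¹ *
        Ntil γ S * ((Dbb K γ)ᵀ * Dbb K γ)⁻¹ * (Dbb K γ)ᵀ =
      Dbb K γ * ((Dbb K γ)ᵀ * Dbb K γ)⁻¹ * (Dbb K γ)ᵀ := by
  have hSinv : S⁻¹ * S = 1 := Matrix.nonsing_inv_mul S (isUnit_iff_ne_zero.mpr hS.det_pos.ne')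
  have hdi : (Matrix.diagonal fun g => ((ngrp γ g : ℝ))⁻¹) *
      (Matrix.diagonal fun g => (ngrp γ g : ℝ)) = 1 := by
    rw [Matrix.diagonal_mul_diagonal]
    have : (fun g => ((ngrp γ g : ℝ))⁻¹ * (ngrp γ g : ℝ)) = fun _ => (1:ℝ) := by
      funext g; exact inv_mul_cancel₀ (ngrp_pos γ hγ g).ne'
    rw [this, Matrix.diagonal_one]
  rw [DtD_inv γ hγ, Dbb, Ntil, ← Matrix.kroneckerMap_transpose, Matrix.transpose_one]
  simp only [← Matrix.mul_kronecker_mul, Matrix.one_mul, Matrix.mul_one]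
  rw [Matrix.mul_assoc (Dmat γ), hdi, Matrix.mul_one, hSinv]

lemma posDef_smul {n : Type*} [Fintype n] {M : Matrix n n ℝ} (hM : M.PosDef)
    {a : ℝ} (ha : 0 < a) : (a • M).PosDef := by
  refine Matrix.PosDef.of_dotProduct_mulVec_pos ?_ (fun x hx => ?_)
  · have := hM.isHermitian
    rw [Matrix.IsHermitian, Matrix.conjTranspose_smul] at *
    rw [this]
    simp
  · rw [Matrix.smul_mulVec, dotProduct_smul, smul_eq_mul]
    exact mul_pos ha (hM.dotProduct_mulVec_pos hx)

lemma posDef_conj {m n : Type*} [Fintype m] [Fintype n]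
    (B : Matrix m n ℝ) {M : Matrix n n ℝ} (hM : M.PosDef)
    (hB : ∀ x : m → ℝ, x ≠ 0 → Bᵀ *ᵥ x ≠ 0) : (B * M * Bᵀ).PosDef := by
  refine Matrix.PosDef.of_dotProduct_mulVec_pos ?_ (fun x hx => ?_)
  · have h := Matrix.isHermitian_mul_mul_conjTranspose B hM.isHermitian
    rwa [Matrix.conjTranspose_eq_transpose_of_trivial] at h
  · have h1 : (B * M * Bᵀ) *ᵥ x = B *ᵥ (M *ᵥ (Bᵀ *ᵥ x)) := by
      rw [← Matrix.mulVec_mulVec, ← Matrix.mulVec_mulVec]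
    rw [h1]
    have h2 : star x ⬝ᵥ (B *ᵥ (M *ᵥ (Bᵀ *ᵥ x))) =
        star (Bᵀ *ᵥ x) ⬝ᵥ (M *ᵥ (Bᵀ *ᵥ x)) := by
      simp only [star_trivial]
      rw [Matrix.dotProduct_mulVec, ← Matrix.mulVec_transpose]
    rw [h2]
    exact hM.dotProduct_mulVec_pos (hB x hx)

lemma Ntil_posDef {N G K : ℕ} (γ : Fin N → Fin G) (hγ : ∀ g : Fin G, ∃ i : Fin N, γ i = g)
    {S : Matrix (Fin K) (Fin K) ℝ} (hS : S.PosDef) : (Ntil γ S).PosDef := by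
  refine Matrix.PosDef.of_dotProduct_mulVec_pos ?_ (fun x hx => ?_)
  · have hSt : Sᵀ = S := by
      have h := hS.isHermitian
      rwa [Matrix.IsHermitian, Matrix.conjTranspose_eq_transpose_of_trivial] at h
    rw [Matrix.IsHermitian, Matrix.conjTranspose_eq_transpose_of_trivial, Ntil,
      ← Matrix.kroneckerMap_transpose, Matrix.diagonal_transpose, hSt]
  · have hmv : ∀ g k, (Ntil γ S *ᵥ x) (g, k) =
        (ngrp γ g : ℝ) * ∑ k', S k k' * x (g, k') := by
      intro g k
      have h1 : (Ntil γ S *ᵥ x) (g, k) =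
          ∑ g', ∑ k', (Matrix.diagonal fun g => (ngrp γ g : ℝ)) g g' * S k k' * x (g', k') := by
        simp [Ntil, Matrix.mulVec, dotProduct, Fintype.sum_prod_type, mul_assoc]
      rw [h1, Finset.sum_eq_single g]
      · rw [Finset.mul_sum]
        apply Finset.sum_congr rfl
        intro k' _
        rw [Matrix.diagonal_apply_eq]
        ring
      · intro g' _ hg'
        apply Finset.sum_eq_zero
        intro k' _
        rw [Matrix.diagonal_apply_ne _ (fun h => hg' h.symm)]
        ring
      · intro h; exact absurd (Finset.mem_univ g) h
    have hexp : star x ⬝ᵥ (Ntil γ S *ᵥ x) =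
        ∑ g : Fin G, (ngrp γ g : ℝ) *
          ((fun k => x (g, k)) ⬝ᵥ (S *ᵥ fun k => x (g, k))) := by
      rw [star_trivial, dotProduct, Fintype.sum_prod_type]
      apply Finset.sum_congr rfl
      intro g _
      rw [dotProduct, Finset.mul_sum]
      apply Finset.sum_congr rfl
      intro k _
      rw [hmv]
      simp only [Matrix.mulVec, dotProduct]
      ring
    rw [hexp]
    obtain ⟨⟨g0, k0⟩, hg0⟩ : ∃ p, x p ≠ 0 := Function.ne_iff.mp hx
    apply Finset.sum_pos'
    · intro g _
      rcases eq_or_ne (fun k => x (g, k)) 0 with h | h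
      · rw [h]; simp
      · have := hS.dotProduct_mulVec_pos h
        simp only [star_trivial] at this
        positivity
    · refine ⟨g0, Finset.mem_univ _, ?_⟩
      have h : (fun k => x (g0, k)) ≠ 0 := by
        intro h; exact hg0 (congrFun h k0)
      have := hS.dotProduct_mulVec_pos h
      simp only [star_trivial] at this
      exact mul_pos (ngrp_pos γ hγ g0) this

lemma matSqrt_spec {n : Type*} [Fintype n] [DecidableEq n] {M : Matrix n n ℝ}
    (h : M.PosSemidef) : matSqrt M * matSqrt M = M ∧ (matSqrt M)ᵀ = matSqrt M := by
  have hUU : (star h.1.eigenvectorUnitary : Matrix n n ℝ) *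
      (h.1.eigenvectorUnitary : Matrix n n ℝ) = 1 := Unitary.coe_star_mul_self _
  rw [matSqrt, dif_pos h]
  constructor
  · conv_rhs => rw [h.1.spectral_theorem, Unitary.conjStarAlgAut_apply]
    simp only [Matrix.mul_assoc]
    rw [← Matrix.mul_assoc (star _ : Matrix n n ℝ) (h.1.eigenvectorUnitary : Matrix n n ℝ), hUU,
      Matrix.one_mul, ← Matrix.mul_assoc (diagonal _), Matrix.diagonal_mul_diagonal]
    congr 1
    congr 1
    congr 1
    funext i
    simp [Real.mul_self_sqrt (h.eigenvalues_nonneg i)]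
  · rw [← Matrix.conjTranspose_eq_transpose_of_trivial]
    simp [Matrix.conjTranspose_mul, Matrix.star_eq_conjTranspose, Matrix.mul_assoc]

/-- Equation (eq:perturbation_kmeans_ts) of the paper: the data vector can be written as
`b = √h · P_{(𝔻(γ),R)} Σ̃_R^{1/2} J + W`. -/
theorem stmt_7 {N G K r : ℕ} (hN : 0 < N) (hG : 0 < G) (hK : 0 < K) (hr : 0 < r)
    (γ : Fin N → Fin G) (hγ : ∀ g : Fin G, ∃ i : Fin N, γ i = g)
    (S : Matrix (Fin K) (Fin K) ℝ) (hS : S.PosDef)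
    (R : Matrix (Fin r) (Fin G × Fin K) ℝ) (hR : R.rank = r) (c : Fin r → ℝ)
    (σ2 : ℝ) (hσ2 : 0 < σ2)
    (b : Fin N × Fin K → ℝ) (hb : R *ᵥ alphaTil γ b ≠ c) :
    b =
      Real.sqrt
          ((R *ᵥ alphaTil γ b - c) ⬝ᵥ
            ((σ2 • (R * (Ntil γ S)⁻¹ * Rᵀ))⁻¹ *ᵥ (R *ᵥ alphaTil γ b - c))) •
        ((Dbb K γ * (Ntil γ S)⁻¹ * Rᵀ * (R * (Ntil γ S)⁻¹ * Rᵀ)⁻¹ *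
            matSqrt (σ2 • (R * (Ntil γ S)⁻¹ * Rᵀ))) *ᵥ
          dir ((matSqrt (σ2 • (R * (Ntil γ S)⁻¹ * Rᵀ)))⁻¹ *ᵥ (R *ᵥ alphaTil γ b - c))) +
      (Dbb K γ *ᵥ alphaTilR γ S R c b +
        ((1 : Matrix (Fin N × Fin K) (Fin N × Fin K) ℝ) -
            ((1 : Matrix (Fin N) (Fin N) ℝ) ⊗ₖ S⁻¹) * Dbb K γ *
              ((Dbb K γ)ᵀ * Dbb K γ)⁻¹ * Ntil γ S *
              ((Dbb K γ)ᵀ * Dbb K γ)⁻¹ * (Dbb K γ)ᵀ) *ᵥ b) := by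
  classical
  set v : Fin r → ℝ := R *ᵥ alphaTil γ b - c with hv_def
  have hv : v ≠ 0 := sub_ne_zero.mpr hb
  set Sg0 : Matrix (Fin r) (Fin r) ℝ := R * (Ntil γ S)⁻¹ * Rᵀ with hSg0_def
  have hRT : ∀ x : Fin r → ℝ, x ≠ 0 → Rᵀ *ᵥ x ≠ 0 := by
    have hli : LinearIndependent ℝ (fun i => R i) := by
      rw [linearIndependent_iff_card_eq_finrank_span]
      rw [Set.finrank, show (fun i => R i) = R.row from rfl, ← Matrix.rank_eq_finrank_span_row, hR, Fintype.card_fin]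
    have hinj : Function.Injective R.vecMul := Matrix.vecMul_injective_iff.mpr hli
    intro x hx hx0
    apply hx
    have h0 : R.vecMul x = R.vecMul 0 := by
      rw [Matrix.zero_vecMul, ← Matrix.mulVec_transpose] at *
      exact hx0
    exact hinj h0
  have hNt : (Ntil γ S).PosDef := Ntil_posDef γ hγ hS
  have hSg0pd : Sg0.PosDef := posDef_conj R hNt.inv hRT
  have hSgpd : (σ2 • Sg0).PosDef := posDef_smul hSg0pd hσ2
  have hpsd : (σ2 • Sg0).PosSemidef := hSgpd.posSemidef
  set Q := matSqrt (σ2 • Sg0) with hQdef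
  have hQ : Q = matSqrt (σ2 • Sg0) := hQdef
  have hQQ : Q * Q = σ2 • Sg0 := by rw [hQ]; exact (matSqrt_spec hpsd).1
  have hQherm : Qᵀ = Q := by
    rw [hQ]
    exact (matSqrt_spec hpsd).2
  have hQdet : IsUnit Q.det := by
    have hdet : Q.det * Q.det = (σ2 • Sg0).det := by rw [← Matrix.det_mul, hQQ]
    have h0 : (σ2 • Sg0).det ≠ 0 := hSgpd.det_pos.ne'
    exact isUnit_iff_ne_zero.mpr fun h => h0 (by rw [← hdet, h, mul_zero])
  have hQmul : Q * Q⁻¹ = 1 := Matrix.mul_nonsing_inv Q hQdet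
  set u : Fin r → ℝ := Q⁻¹ *ᵥ v with hu_def
  have hQu : Q *ᵥ u = v := by rw [hu_def, Matrix.mulVec_mulVec, hQmul, Matrix.one_mulVec]
  have hu : u ≠ 0 := fun h => hv (by rw [← hQu, h, Matrix.mulVec_zero])
  have hinv : (σ2 • Sg0)⁻¹ = Q⁻¹ * Q⁻¹ := by rw [← hQQ, Matrix.mul_inv_rev]
  have hQinvT : (Q⁻¹)ᵀ = Q⁻¹ := by rw [Matrix.transpose_nonsing_inv, hQherm]
  have hh : v ⬝ᵥ ((σ2 • Sg0)⁻¹ *ᵥ v) = sqNorm u := by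
    rw [hinv, ← Matrix.mulVec_mulVec, Matrix.dotProduct_mulVec, ← Matrix.mulVec_transpose,
      hQinvT, ← hu_def]
    simp [sqNorm, dotProduct, sq]
  have hnorm : Real.sqrt (sqNorm u) ≠ 0 := by
    have hpos : 0 < sqNorm u := by
      obtain ⟨i, hi⟩ := Function.ne_iff.mp hu
      exact Finset.sum_pos' (fun j _ => sq_nonneg _) ⟨i, Finset.mem_univ _, lt_of_le_of_ne (sq_nonneg _) (Ne.symm (pow_ne_zero 2 hi))⟩
    positivity
  have hscale : Real.sqrt (sqNorm u) • dir u = u := by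
    rw [dir, smul_smul, mul_inv_cancel₀ hnorm, one_smul]
  have T1h : Real.sqrt (v ⬝ᵥ ((σ2 • Sg0)⁻¹ *ᵥ v)) •
      ((Dbb K γ * (Ntil γ S)⁻¹ * Rᵀ * Sg0⁻¹ * Q) *ᵥ dir u) =
      (Dbb K γ * (Ntil γ S)⁻¹ * Rᵀ * Sg0⁻¹) *ᵥ v := by
    rw [hh, ← Matrix.mulVec_smul, hscale, ← Matrix.mulVec_mulVec, hQu]
  have T2h : Dbb K γ *ᵥ alphaTilR γ S R c b =
      Dbb K γ *ᵥ alphaTil γ b - (Dbb K γ * (Ntil γ S)⁻¹ * Rᵀ * Sg0⁻¹) *ᵥ v := by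
    rw [alphaTilR, Matrix.mulVec_sub, Matrix.mulVec_mulVec]
    simp only [Matrix.mul_assoc, hSg0_def, hv_def]
  have T3h : ((1 : Matrix (Fin N × Fin K) (Fin N × Fin K) ℝ) -
      ((1 : Matrix (Fin N) (Fin N) ℝ) ⊗ₖ S⁻¹) * Dbb K γ *
        ((Dbb K γ)ᵀ * Dbb K γ)⁻¹ * Ntil γ S *
        ((Dbb K γ)ᵀ * Dbb K γ)⁻¹ * (Dbb K γ)ᵀ) *ᵥ b =
      b - Dbb K γ *ᵥ alphaTil γ b := by
    rw [Matrix.sub_mulVec, Matrix.one_mulVec, key γ hγ S hS, alphaTil, Matrix.mulVec_mulVec]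
    simp only [Matrix.mul_assoc]
  rw [T1h, T2h, T3h]
  abel
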